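/- Fix an integer d ≥ 4 and set g₁ = (d−3)c₂ − (d−1)c₁², g₂ = (d−3)²(d²−3d+3)c₃ − (d−1)²(d²−3d+1)c₁³, g₃ = c₁c₃ in ℚ[c₁,c₂,c₃]. Then the quotient ℚ[c₁,c₂,c₃]/(g₁, g₂, g₃, c₁⁴) is a 4-dimensional ℚ-vector space with basis the images of 1, c₁, c₁², c₁³. -/

import Mathlib

/-! In the quotient, the first two relations express c₂ and c₃ as rational multiples of c₁² and
c₁³, since their leading coefficients d - 3 and (d - 3)²(d² - 3d + 3) are nonzero for d ≥ 4; then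
c₁c₃ is a multiple of c₁⁴. Eliminating c₂ and c₃ identifies the quotient with ℚ[X]/(X⁴), which has
the power basis 1, X, X², X³ with X the image of c₁. -/

noncomputable section

abbrev R3 : Type := MvPolynomial (Fin 3) ℚ

noncomputable def cc (i : Fin 3) : R3 := MvPolynomial.X i

noncomputable def Jrel (d : ℕ) : Ideal R3 :=
  Ideal.span {(((d : R3) - 3) * cc 1 - ((d : R3) - 1) * cc 0 ^ 2 : R3),
    (((d : R3) - 3) ^ 2 * ((d : R3) ^ 2 - 3 * (d : R3) + 3) * cc 2
      - ((d : R3) - 1) ^ 2 * ((d : R3) ^ 2 - 3 * (d : R3) + 1) * cc 0 ^ 3 : R3),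
    (cc 0 * cc 2 : R3), (cc 0 ^ 4 : R3)}

open Polynomial MvPolynomial

namespace MvPolynomial

section Graph

variable {R : Type*} [CommRing R] {n : ℕ}

def graphIdeal (f : R[X]) (p : Fin n → R[X]) : Ideal (MvPolynomial (Fin (n + 1)) R) :=
  Ideal.span (insert (Polynomial.aeval (X 0) f)
    (Set.range fun i => X i.succ - Polynomial.aeval (X 0) (p i)))

variable (f : R[X]) (p : Fin n → R[X])

local notation "Q" => MvPolynomial (Fin (n + 1)) R ⧸ graphIdeal f p

theorem aeval_X_zero_mem_graphIdeal : Polynomial.aeval (X 0) f ∈ graphIdeal f p :=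
  Ideal.subset_span (Set.mem_insert _ _)

theorem X_succ_sub_aeval_X_zero_mem_graphIdeal (i : Fin n) :
    X i.succ - Polynomial.aeval (X 0) (p i) ∈ graphIdeal f p :=
  Ideal.subset_span (Set.mem_insert_of_mem _ (Set.mem_range_self i))

theorem aeval_mk_X_zero (q : R[X]) :
    Polynomial.aeval (Ideal.Quotient.mk (graphIdeal f p) (X 0)) q =
      Ideal.Quotient.mk (graphIdeal f p) (Polynomial.aeval (X 0) q) := by
  rw [← Ideal.Quotient.mkₐ_eq_mk R, Polynomial.aeval_algHom_apply]

theorem graphIdeal_le_ker :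
    graphIdeal f p ≤ RingHom.ker
      (aeval (Fin.cons (AdjoinRoot.root f) fun i => Polynomial.aeval (AdjoinRoot.root f) (p i)) :
        MvPolynomial (Fin (n + 1)) R →ₐ[R] AdjoinRoot f) := by
  rw [graphIdeal, Ideal.span_le, Set.insert_subset_iff, Set.range_subset_iff]
  refine ⟨?_, fun i => ?_⟩ <;> simp [← Polynomial.aeval_algHom_apply, AdjoinRoot.aeval_eq]

def quotientGraphIdealToAdjoinRoot : (Q) →ₐ[R] AdjoinRoot f :=
  Ideal.Quotient.liftₐ _ _ fun _ h => RingHom.mem_ker.1 (graphIdeal_le_ker f p h)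

@[simp]
theorem quotientGraphIdealToAdjoinRoot_mk_X_zero :
    quotientGraphIdealToAdjoinRoot f p (Ideal.Quotient.mk _ (X 0)) = AdjoinRoot.root f :=
  aeval_X _ _

@[simp]
theorem quotientGraphIdealToAdjoinRoot_mk_X_succ (i : Fin n) :
    quotientGraphIdealToAdjoinRoot f p (Ideal.Quotient.mk _ (X i.succ)) =
      AdjoinRoot.mk f (p i) :=
  (aeval_X _ _).trans (AdjoinRoot.aeval_eq _)

def adjoinRootToQuotientGraphIdeal : AdjoinRoot f →ₐ[R] Q :=
  AdjoinRoot.liftAlgHom f (Algebra.ofId R _) (Ideal.Quotient.mk _ (X 0)) <| by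
    change Polynomial.aeval _ f = 0
    rw [aeval_mk_X_zero, Ideal.Quotient.eq_zero_iff_mem]
    exact aeval_X_zero_mem_graphIdeal f p

@[simp]
theorem adjoinRootToQuotientGraphIdeal_mk (q : R[X]) :
    adjoinRootToQuotientGraphIdeal f p (AdjoinRoot.mk f q) =
      Ideal.Quotient.mk _ (Polynomial.aeval (X 0) q) :=
  aeval_mk_X_zero f p q

theorem adjoinRootToQuotientGraphIdeal_root :
    adjoinRootToQuotientGraphIdeal f p (AdjoinRoot.root f) = Ideal.Quotient.mk _ (X 0) := by
  simp [← AdjoinRoot.mk_X]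

def quotientGraphIdealEquiv : (Q) ≃ₐ[R] AdjoinRoot f :=
  AlgEquiv.ofAlgHom (quotientGraphIdealToAdjoinRoot f p) (adjoinRootToQuotientGraphIdeal f p)
    (AdjoinRoot.algHom_ext (by simp [adjoinRootToQuotientGraphIdeal_root]))
    (Ideal.Quotient.algHom_ext R <| MvPolynomial.algHom_ext fun i => Fin.cases
      (by simp [adjoinRootToQuotientGraphIdeal_root])
      (fun i => by
        simp only [AlgHom.comp_apply, Ideal.Quotient.mkₐ_eq_mk, AlgHom.id_apply,
          quotientGraphIdealToAdjoinRoot_mk_X_succ, adjoinRootToQuotientGraphIdeal_mk]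
        exact (Ideal.Quotient.eq.2 (X_succ_sub_aeval_X_zero_mem_graphIdeal f p i)).symm) i)

theorem quotientGraphIdealEquiv_symm_root :
    (quotientGraphIdealEquiv f p).symm (AdjoinRoot.root f) = Ideal.Quotient.mk _ (X 0) :=
  adjoinRootToQuotientGraphIdeal_root f p

variable {f} in
def quotientGraphIdealPowerBasis (hf : f.Monic) : PowerBasis R (Q) :=
  (AdjoinRoot.powerBasis' hf).map (quotientGraphIdealEquiv f p).symm

@[simp]
theorem quotientGraphIdealPowerBasis_gen (hf : f.Monic) :
    (quotientGraphIdealPowerBasis p hf).gen = Ideal.Quotient.mk _ (X 0) :=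
  quotientGraphIdealEquiv_symm_root f p

theorem graphIdeal_fin_two (p₁ p₂ : R[X]) :
    graphIdeal f ![p₁, p₂] = Ideal.span {Polynomial.aeval (X 0) f,
      X 1 - Polynomial.aeval (X 0) p₁, X 2 - Polynomial.aeval (X 0) p₂} := by
  rw [graphIdeal, Fin.range_fin_succ, Fin.range_fin_succ, Set.range_eq_empty, insert_empty_eq]
  rfl

end Graph

section FourthPower

variable {K : Type*} [Field K] {α β γ δ : K}

local notation "P" => MvPolynomial (Fin 3) K

theorem graphIdeal_X_pow_four (a b : K) :
    graphIdeal (Polynomial.X ^ 4)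
        ![Polynomial.C a * Polynomial.X ^ 2, Polynomial.C b * Polynomial.X ^ 3] =
      Ideal.span {X 0 ^ 4, X 1 - C a * X 0 ^ 2, X 2 - C b * X 0 ^ 3} := by
  simp [graphIdeal_fin_two, MvPolynomial.algebraMap_eq]

theorem span_le_graphIdeal (hα : α ≠ 0) (hγ : γ ≠ 0) :
    Ideal.span {C α * X 1 - C β * X 0 ^ 2, C γ * X 2 - C δ * X 0 ^ 3, X 0 * X 2, X 0 ^ 4} ≤
      graphIdeal (Polynomial.X ^ 4)
        ![Polynomial.C (β / α) * Polynomial.X ^ 2, Polynomial.C (δ / γ) * Polynomial.X ^ 3] := by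
  have hβ : C α * C (β / α) = (C β : P) := by rw [← map_mul, mul_div_cancel₀ _ hα]
  have hδ : C γ * C (δ / γ) = (C δ : P) := by rw [← map_mul, mul_div_cancel₀ _ hγ]
  rw [graphIdeal_X_pow_four]
  simp only [Ideal.span_le, Set.insert_subset_iff, Set.singleton_subset_iff, SetLike.mem_coe]
  refine ⟨?_, ?_, ?_, Ideal.subset_span (by simp)⟩
  · rw [show (C α * X 1 - C β * X 0 ^ 2 : P) = C α * (X 1 - C (β / α) * X 0 ^ 2) by
      linear_combination X 0 ^ 2 * hβ]
    exact Ideal.mul_mem_left _ _ (Ideal.subset_span (by simp))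
  · rw [show (C γ * X 2 - C δ * X 0 ^ 3 : P) = C γ * (X 2 - C (δ / γ) * X 0 ^ 3) by
      linear_combination X 0 ^ 3 * hδ]
    exact Ideal.mul_mem_left _ _ (Ideal.subset_span (by simp))
  · rw [show (X 0 * X 2 : P) = X 0 * (X 2 - C (δ / γ) * X 0 ^ 3) + C (δ / γ) * X 0 ^ 4 by ring]
    exact Ideal.add_mem _ (Ideal.mul_mem_left _ _ (Ideal.subset_span (by simp)))
      (Ideal.mul_mem_left _ _ (Ideal.subset_span (by simp)))

theorem graphIdeal_le_span (hα : α ≠ 0) (hγ : γ ≠ 0) :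
    graphIdeal (Polynomial.X ^ 4)
        ![Polynomial.C (β / α) * Polynomial.X ^ 2, Polynomial.C (δ / γ) * Polynomial.X ^ 3] ≤
      Ideal.span {C α * X 1 - C β * X 0 ^ 2, C γ * X 2 - C δ * X 0 ^ 3, X 0 * X 2, X 0 ^ 4} := by
  have hα' : C α⁻¹ * C α = (1 : P) := by rw [← map_mul, inv_mul_cancel₀ hα, map_one]
  have hγ' : C γ⁻¹ * C γ = (1 : P) := by rw [← map_mul, inv_mul_cancel₀ hγ, map_one]
  rw [graphIdeal_X_pow_four]
  simp only [Ideal.span_le, Set.insert_subset_iff, Set.singleton_subset_iff, SetLike.mem_coe]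
  refine ⟨Ideal.subset_span (by simp), ?_, ?_⟩
  · rw [show (X 1 - C (β / α) * X 0 ^ 2 : P) = C α⁻¹ * (C α * X 1 - C β * X 0 ^ 2) by
      rw [div_eq_inv_mul, map_mul]; linear_combination (-X 1) * hα']
    exact Ideal.mul_mem_left _ _ (Ideal.subset_span (by simp))
  · rw [show (X 2 - C (δ / γ) * X 0 ^ 3 : P) = C γ⁻¹ * (C γ * X 2 - C δ * X 0 ^ 3) by
      rw [div_eq_inv_mul, map_mul]; linear_combination (-X 2) * hγ']
    exact Ideal.mul_mem_left _ _ (Ideal.subset_span (by simp))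

theorem span_eq_graphIdeal (hα : α ≠ 0) (hγ : γ ≠ 0) :
    Ideal.span {C α * X 1 - C β * X 0 ^ 2, C γ * X 2 - C δ * X 0 ^ 3, X 0 * X 2, X 0 ^ 4} =
      graphIdeal (Polynomial.X ^ 4)
        ![Polynomial.C (β / α) * Polynomial.X ^ 2, Polynomial.C (δ / γ) * Polynomial.X ^ 3] :=
  le_antisymm (span_le_graphIdeal hα hγ) (graphIdeal_le_span hα hγ)

end FourthPower

end MvPolynomial

theorem Jrel_eq_graphIdeal {d : ℕ} (hd : 4 ≤ d) :
    Jrel d = graphIdeal (Polynomial.X ^ 4)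
      ![Polynomial.C (((d : ℚ) - 1) / ((d : ℚ) - 3)) * Polynomial.X ^ 2,
        Polynomial.C (((d : ℚ) - 1) ^ 2 * ((d : ℚ) ^ 2 - 3 * d + 1) /
          (((d : ℚ) - 3) ^ 2 * ((d : ℚ) ^ 2 - 3 * d + 3))) * Polynomial.X ^ 3] := by
  have hd' : (4 : ℚ) ≤ d := by exact_mod_cast hd
  have hα : (d : ℚ) - 3 ≠ 0 := by linarith
  have hγ : ((d : ℚ) - 3) ^ 2 * ((d : ℚ) ^ 2 - 3 * d + 3) ≠ 0 :=
    mul_ne_zero (pow_ne_zero _ hα) (by nlinarith)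
  rw [Jrel, ← span_eq_graphIdeal hα hγ]
  simp only [cc, map_sub, map_add, map_mul, map_pow, map_natCast, map_ofNat, map_one]

theorem stmt_17 (d : ℕ) (hd : 4 ≤ d) :
    ∃ B : Module.Basis (Fin 4) ℚ (R3 ⧸ Jrel d),
      ∀ i : Fin 4, B i = Ideal.Quotient.mk (Jrel d) (cc 0 ^ (i : ℕ)) := by
  rw [Jrel_eq_graphIdeal hd]
  refine ⟨(quotientGraphIdealPowerBasis _ (Polynomial.monic_X_pow 4)).basis.reindex
    (finCongr (Polynomial.natDegree_X_pow 4)), fun i => ?_⟩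
  rw [Module.Basis.reindex_apply, PowerBasis.basis_eq_pow, quotientGraphIdealPowerBasis_gen, cc,
    map_pow]
  rfl
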